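/- arXiv:1809.10741 — 4 statements merged into one kernel-verified Lean document; each statement's English description precedes it below -/
import Mathlib

section
/- For every x₀ > 0, the equation tanh(x₀/z₀) = z₀/x₀ has a unique solution z₀ in the interval (0, ∞). -/
/-!
Substituting `t = x₀ / z₀` turns the equation into `t * tanh t = 1`. The function
`t ↦ t * tanh t` is strictly increasing on `[0, ∞)`, vanishes at `0` and is at least `1` at
`t = 1 / tanh 1`, so by the intermediate value theorem it takes the value `1` exactly once.
-/

open Real Set

namespace Real

theorem tanh_strictMono : StrictMono tanh := fun x y hxy => by
  rwa [← artanh_lt_artanh_iff ⟨neg_one_lt_tanh x, tanh_lt_one x⟩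
    ⟨neg_one_lt_tanh y, tanh_lt_one y⟩, artanh_tanh, artanh_tanh]

theorem tanh_pos {x : ℝ} (hx : 0 < x) : 0 < tanh x := by
  simpa only [tanh_zero] using tanh_strictMono hx

theorem continuous_tanh : Continuous tanh := by
  simp only [funext tanh_eq_sinh_div_cosh]
  exact continuous_sinh.div continuous_cosh fun x => (cosh_pos x).ne'

theorem strictMonoOn_mul_tanh : StrictMonoOn (fun t => t * tanh t) (Ici 0) := by
  intro a (ha : 0 ≤ a) b _ hab
  calc a * tanh a ≤ a * tanh b := mul_le_mul_of_nonneg_left (tanh_strictMono hab).le ha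
    _ < b * tanh b := mul_lt_mul_of_pos_right hab (tanh_pos (ha.trans_lt hab))

theorem exists_mul_tanh_eq_one : ∃ t, 0 ≤ t ∧ t * tanh t = 1 := by
  have htanh_one : 0 < tanh 1 := tanh_pos one_pos
  have h_inv_ge_one : 1 ≤ 1 / tanh 1 := by
    rw [le_div_iff₀ htanh_one, one_mul]
    exact (tanh_lt_one 1).le
  have h_at_inv : 1 ≤ 1 / tanh 1 * tanh (1 / tanh 1) := by
    calc (1 : ℝ) = 1 / tanh 1 * tanh 1 := by field_simp
      _ ≤ 1 / tanh 1 * tanh (1 / tanh 1) :=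
        mul_le_mul_of_nonneg_left (tanh_strictMono.monotone h_inv_ge_one) (by positivity)
  have hcont : ContinuousOn (fun t => t * tanh t) (Icc 0 (1 / tanh 1)) :=
    (continuous_id.mul continuous_tanh).continuousOn
  obtain ⟨t, ht, ht_eq⟩ := intermediate_value_Icc (by positivity) hcont
    ⟨by simp only [zero_mul, zero_le_one], h_at_inv⟩
  exact ⟨t, ht.1, ht_eq⟩

theorem existsUnique_mul_tanh_eq_one : ∃! t, 0 ≤ t ∧ t * tanh t = 1 := by
  obtain ⟨t, ht, ht_eq⟩ := exists_mul_tanh_eq_one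
  exact ⟨t, ⟨ht, ht_eq⟩, fun s ⟨hs, hs_eq⟩ =>
    strictMonoOn_mul_tanh.injOn hs ht (hs_eq.trans ht_eq.symm)⟩

theorem tanh_div_eq_div_iff {x z : ℝ} (hx : 0 < x) (hz : 0 < z) :
    tanh (x / z) = z / x ↔ x / z * tanh (x / z) = 1 := by
  rw [div_mul_eq_mul_div, div_eq_one_iff_eq hz.ne', eq_div_iff hx.ne', mul_comm x]

end Real

/-- For every `x₀ > 0`, the equation `tanh (x₀ / z₀) = z₀ / x₀` has a unique
solution `z₀ ∈ (0, ∞)`. -/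
theorem stmt_1 (x₀ : ℝ) (hx : 0 < x₀) :
    ∃! z₀ : ℝ, z₀ ∈ Set.Ioi (0 : ℝ) ∧ Real.tanh (x₀ / z₀) = z₀ / x₀ := by
  obtain ⟨t, ⟨ht, ht_eq⟩, ht_unique⟩ := existsUnique_mul_tanh_eq_one
  have ht_pos : 0 < t := ht.lt_of_ne (by rintro rfl; simp at ht_eq)
  refine ⟨x₀ / t, ⟨div_pos hx ht_pos, ?_⟩, ?_⟩
  · rw [tanh_div_eq_div_iff hx (div_pos hx ht_pos), div_div_cancel₀ hx.ne']
    exact ht_eq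
  · rintro z ⟨hz, hz_eq⟩
    have := ht_unique (x₀ / z) ⟨(div_pos hx hz).le, (tanh_div_eq_div_iff hx hz).1 hz_eq⟩
    rw [← this, div_div_cancel₀ hx.ne']
end

section
/- Let α > 0 and let f : [0, r] → (0, ∞) be a C² solution of f''(x)/(1 + f'(x)²) + f'(x)/x = α/f(x) on (0, r] with f(0) = z₀ > 0 and f'(0) = 0, and suppose f(x) > sqrt(α/2)·x for all x in (0, r]. Then f(x) < ((α+2)/α)·f(r) - sqrt(r² + 4f(r)²/α² - x²) for all 0 ≤ x < r. In particular f(0) < ((α+2)/α)·f(r) - sqrt(r² + 4f(r)²/α²). -/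
/-!
Write `L = (f²)' - α x = 2 f f' - α x`. At a zero of `L` the ODE gives
`L' = (2 + α) f'² > 0`, so `L` cannot pass from nonnegative to negative values. Near the singular
point `x = 0` it cannot stay negative either: there `f'/x < α/(2f)`, so the ODE forces
`f'' ≥ α/(2f)`, and integrating from `f'(0) = 0` gives `L > 0`. Hence `(f²)' ≥ α x` on `(0, r)`,
`f` is increasing, and `Φ(x) = (c - f x)² + x²` is strictly decreasing with `Φ(r) = R²`, which is
the comparison with the spherical cap.
-/

open Set Real
open scoped Topology

structure IsSingularMinimalProfile (α r : ℝ) (f : ℝ → ℝ) : Prop where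
  contDiffOn : ContDiffOn ℝ 2 f (Icc 0 r)
  pos : ∀ x ∈ Icc 0 r, 0 < f x
  ode : ∀ x ∈ Ioo 0 r, deriv (deriv f) x / (1 + deriv f x ^ 2) + deriv f x / x = α / f x

theorem div_two_mul_le_of_ode {α x F p q : ℝ} (hα : 0 < α) (hx : 0 < x) (hF : 0 < F)
    (hode : q / (1 + p ^ 2) + p / x = α / F) (hL : 2 * F * p ≤ α * x) : α / (2 * F) ≤ q := by
  have hp : p / x ≤ α / (2 * F) := by
    rw [div_le_div_iff₀ hx (by positivity)]; linarith
  have hq : α / (2 * F) ≤ q / (1 + p ^ 2) := by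
    have : α / F = 2 * (α / (2 * F)) := by field_simp
    linarith
  rw [le_div_iff₀ (by positivity)] at hq
  nlinarith [div_pos hα (by positivity : 0 < 2 * F), sq_nonneg p]

theorem lt_two_mul_add_of_ode {α x F p q : ℝ} (hα : 0 < α) (hx : 0 < x) (hF : 0 < F)
    (hode : q / (1 + p ^ 2) + p / x = α / F) (hL : α * x = 2 * F * p) :
    α < 2 * p * p + 2 * F * q := by
  have hp : 0 < p := by nlinarith
  have hq : F * q = α / 2 * (1 + p ^ 2) := by
    field_simp at hode
    nlinarith
  nlinarith

namespace IsSingularMinimalProfile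

variable {α r : ℝ} {f : ℝ → ℝ}

theorem hasDerivAt (hf : IsSingularMinimalProfile α r f) {x : ℝ} (hx : x ∈ Ioo 0 r) :
    HasDerivAt f (deriv f x) x :=
  ((hf.contDiffOn.mono Ioo_subset_Icc_self).differentiableOn (by norm_num) x hx
    |>.differentiableAt (Ioo_mem_nhds hx.1 hx.2)).hasDerivAt

theorem hasDerivAt_deriv (hf : IsSingularMinimalProfile α r f) {x : ℝ} (hx : x ∈ Ioo 0 r) :
    HasDerivAt (deriv f) (deriv (deriv f) x) x :=
  (((hf.contDiffOn.mono Ioo_subset_Icc_self).deriv_of_isOpen (m := 1) isOpen_Ioo (by norm_num)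
    ).differentiableOn (by norm_num) x hx |>.differentiableAt (Ioo_mem_nhds hx.1 hx.2)).hasDerivAt

/-- The ODE forces `f' x = x (α / f - f'' / (1 + f'²))`, whose right-hand side tends to `0`
at the singular point `x = 0`. -/
theorem exists_deriv_extension (hf : IsSingularMinimalProfile α r f) (hr : 0 < r) :
    ∃ g : ℝ → ℝ, ContinuousOn g (Icc 0 r) ∧ g 0 = 0 ∧
      ∀ x ∈ Ioo 0 r, g x = deriv f x ∧ HasDerivAt g (deriv (deriv f) x) x := by
  have hu : UniqueDiffOn ℝ (Icc 0 r) := uniqueDiffOn_Icc hr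
  set g := derivWithin f (Icc 0 r)
  have hg : ContDiffOn ℝ 1 g (Icc 0 r) := hf.contDiffOn.derivWithin hu (by norm_num)
  have hgf : ∀ x ∈ Ioo 0 r, g =ᶠ[𝓝 x] deriv f := fun x hx => by
    filter_upwards [Ioo_mem_nhds hx.1 hx.2] with y hy
    exact derivWithin_of_mem_nhds (Icc_mem_nhds hy.1 hy.2)
  set g' := derivWithin g (Icc 0 r)
  have hg' : ContinuousOn g' (Icc 0 r) := hg.continuousOn_derivWithin hu le_rfl
  have hg'f : ∀ x ∈ Ioo 0 r, g' x = deriv (deriv f) x := fun x hx => by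
    change derivWithin g (Icc 0 r) x = _
    rw [derivWithin_of_mem_nhds (Icc_mem_nhds hx.1 hx.2), (hgf x hx).deriv_eq]
  have hrhs : ContinuousOn (fun x => x * (α / f x - g' x / (1 + g x ^ 2))) (Icc 0 r) :=
    continuousOn_id.mul <| (continuousOn_const.div hf.contDiffOn.continuousOn
      fun x hx => (hf.pos x hx).ne').sub <|
      hg'.div (continuousOn_const.add (hg.continuousOn.pow 2)) fun x _ => by positivity
  have heq : EqOn g (fun x => x * (α / f x - g' x / (1 + g x ^ 2))) (Icc 0 r) := by
    refine EqOn.of_subset_closure (fun x hx => ?_) hg.continuousOn hrhs Ioo_subset_Icc_self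
      (by rw [closure_Ioo hr.ne])
    have hode := hf.ode x hx
    rw [← (hgf x hx).eq_of_nhds, ← hg'f x hx] at hode
    rw [show α / f x - g' x / (1 + g x ^ 2) = g x / x by linarith, mul_div_cancel₀ _ hx.1.ne']
  refine ⟨g, hg.continuousOn, by simpa using heq ⟨le_rfl, hr.le⟩, fun x hx =>
    ⟨(hgf x hx).eq_of_nhds, (hf.hasDerivAt_deriv hx).congr_of_eventuallyEq (hgf x hx)⟩⟩

/-- If `(f²)' < α x` on all of `(0, b]`, the ODE gives `f'' ≥ α / (2 f) ≥ α / (2 f b)`, and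
integrating from `f'(0) = 0` gives `(f²)'(b) > α b`. -/
theorem exists_le_mul_deriv (hα : 0 < α) (hf : IsSingularMinimalProfile α r f) {b : ℝ}
    (hb : b ∈ Ioo 0 r) : ∃ a ∈ Ioc 0 b, α * a ≤ 2 * f a * deriv f a := by
  by_contra! hlt
  obtain ⟨g, hgc, hg0, hg⟩ := hf.exists_deriv_extension (hb.1.trans hb.2)
  have hsub : Icc 0 b ⊆ Icc 0 r := Icc_subset_Icc_right hb.2.le
  have hIoo : ∀ {t}, t ∈ Ioo 0 b → t ∈ Ioo 0 r := fun ht => ⟨ht.1, ht.2.trans hb.2⟩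
  have hconvex : ∀ t ∈ Ioo 0 b, α / (2 * f t) ≤ deriv (deriv f) t := fun t ht =>
    div_two_mul_le_of_ode hα ht.1 (hf.pos t (hsub (Ioo_subset_Icc_self ht))) (hf.ode t (hIoo ht))
      (hlt t ⟨ht.1, ht.2.le⟩).le
  have hg_gt : ∀ c, (∀ t ∈ Ioo 0 b, c < deriv (deriv f) t) → ∀ x ∈ Ioc 0 b, c * x < g x := by
    intro c hc x hx
    have hdiff : DifferentiableOn ℝ g (interior (Icc 0 b)) := fun t ht => by
      rw [interior_Icc] at ht
      exact (hg t (hIoo ht)).2.differentiableAt.differentiableWithinAt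
    have := (convex_Icc 0 b).mul_sub_lt_image_sub_of_lt_deriv (hgc.mono hsub) hdiff
      (fun t ht => by rw [interior_Icc] at ht; rw [(hg t (hIoo ht)).2.deriv]; exact hc t ht)
      0 (left_mem_Icc.2 hb.1.le) x (Ioc_subset_Icc_self hx) hx.1
    simpa [hg0] using this
  have hpos'' : ∀ s ∈ Ioo 0 b, 0 < deriv (deriv f) s := fun s hs => by
    have := hf.pos s (hsub (Ioo_subset_Icc_self hs))
    exact (div_pos hα (by linarith)).trans_le (hconvex s hs)
  have hmono : StrictMonoOn f (Icc 0 b) := by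
    refine strictMonoOn_of_deriv_pos (convex_Icc 0 b) (hf.contDiffOn.continuousOn.mono hsub)
      fun t ht => ?_
    rw [interior_Icc] at ht
    rw [← (hg t (hIoo ht)).1]
    simpa using hg_gt 0 hpos'' t (Ioo_subset_Ioc_self ht)
  have hfb := hf.pos b (hsub (right_mem_Icc.2 hb.1.le))
  have hgb : α / (2 * f b) * b < g b := hg_gt _ (fun t ht => by
    have hft := hf.pos t (hsub (Ioo_subset_Icc_self ht))
    have := hmono (Ioo_subset_Icc_self ht) (right_mem_Icc.2 hb.1.le) ht.2
    exact (div_lt_div_of_pos_left hα (by linarith) (by linarith)).trans_le (hconvex t ht))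
    b (right_mem_Ioc.2 hb.1)
  have := hlt b (right_mem_Ioc.2 hb.1)
  rw [← (hg b hb).1] at this
  rw [div_mul_eq_mul_div, div_lt_iff₀ (by positivity)] at hgb
  linarith

theorem mul_le_two_mul_mul_deriv (hα : 0 < α) (hf : IsSingularMinimalProfile α r f) {x : ℝ}
    (hx : x ∈ Ioo 0 r) : α * x ≤ 2 * f x * deriv f x := by
  obtain ⟨a, ha, hLa⟩ := hf.exists_le_mul_deriv hα hx
  have hsub : Icc a x ⊆ Ioo 0 r := Icc_subset_Ioo ha.1 hx.2
  have hL : ∀ t ∈ Ioo 0 r, HasDerivAt (fun t => α * t - 2 * f t * deriv f t)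
      (α - (2 * deriv f t * deriv f t + 2 * f t * deriv (deriv f) t)) t := fun t ht =>
    ((hasDerivAt_id' t).const_mul α |>.congr_deriv (mul_one α)).sub
      (((hf.hasDerivAt ht).const_mul 2).mul (hf.hasDerivAt_deriv ht))
  have := image_le_of_deriv_right_lt_deriv_boundary' (B := 0) (B' := 0)
    (fun t ht => (hL t (hsub ht)).continuousAt.continuousWithinAt)
    (fun t ht => (hL t (hsub (Ico_subset_Icc_self ht))).hasDerivWithinAt)
    (by simpa using hLa) continuousOn_const (fun _ _ => hasDerivWithinAt_const _ _ _)
    (fun t ht hLt => by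
      have ht' := hsub (Ico_subset_Icc_self ht)
      simpa using lt_two_mul_add_of_ode hα ht'.1 (hf.pos t (Ioo_subset_Icc_self ht'))
        (hf.ode t ht') (by simpa [sub_eq_zero] using hLt))
    (right_mem_Icc.2 ha.2)
  simpa using this

end IsSingularMinimalProfile

theorem lt_sphericalCap {α r : ℝ} {f f' : ℝ → ℝ} (hα : 0 < α) (hcont : ContinuousOn f (Icc 0 r))
    (hpos : ∀ x ∈ Icc 0 r, 0 < f x) (hderiv : ∀ x ∈ Ioo 0 r, HasDerivAt f (f' x) x)
    (hgrowth : ∀ x ∈ Ioo 0 r, α * x ≤ 2 * f x * f' x) {x : ℝ} (hx : x ∈ Ico 0 r) :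
    f x < (α + 2) / α * f r - √(r ^ 2 + 4 * f r ^ 2 / α ^ 2 - x ^ 2) := by
  have hf' : ∀ t ∈ Ioo 0 r, 0 < f' t := fun t ht => by
    have := hpos t (Ioo_subset_Icc_self ht)
    nlinarith [hgrowth t ht, mul_pos hα ht.1]
  have hmono : StrictMonoOn f (Icc 0 r) := strictMonoOn_of_deriv_pos (convex_Icc 0 r) hcont
    fun t ht => by rw [interior_Icc] at ht; rw [(hderiv t ht).deriv]; exact hf' t ht
  have hr : r ∈ Icc 0 r := right_mem_Icc.2 (hx.1.trans hx.2.le)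
  set c := (α + 2) / α * f r
  have hc : α * (c - f r) = 2 * f r := by simp only [c]; field_simp; ring
  have hcf : ∀ t ∈ Ico 0 r, 2 * f t < α * (c - f t) := fun t ht => by
    nlinarith [hmono (Ico_subset_Icc_self ht) hr ht.2]
  let Φ t := (c - f t) ^ 2 + t ^ 2
  have hΦ : StrictAntiOn Φ (Icc 0 r) := by
    refine strictAntiOn_of_deriv_neg (convex_Icc 0 r)
      (((continuousOn_const.sub hcont).pow 2).add (continuousOn_pow 2)) fun t ht => ?_
    rw [interior_Icc] at ht
    have hd : HasDerivAt Φ (2 * t - 2 * (c - f t) * f' t) t := by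
      refine ((((hasDerivAt_const t c).sub (hderiv t ht)).pow 2).add
        (hasDerivAt_pow 2 t)).congr_deriv ?_
      simp only [Pi.sub_apply]
      push_cast
      ring
    rw [hd.deriv]
    have := hcf t (Ioo_subset_Ico_self ht)
    nlinarith [hgrowth t ht, mul_lt_mul_of_pos_right this (hf' t ht)]
  have hΦr : Φ r = r ^ 2 + 4 * f r ^ 2 / α ^ 2 := by
    simp only [Φ, show c - f r = 2 * f r / α by field_simp; linarith]
    ring
  have hcx : 0 < c - f x := by nlinarith [hpos x (Ico_subset_Icc_self hx), hcf x hx]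
  have hsqrt := (sqrt_lt' hcx).2 (by linarith [hΦ (Ico_subset_Icc_self hx) hr hx.2] :
    r ^ 2 + 4 * f r ^ 2 / α ^ 2 - x ^ 2 < (c - f x) ^ 2)
  linarith

theorem stmt_6_general (α r : ℝ) (hα : 0 < α) (hr : 0 < r)
    (f : ℝ → ℝ) (hf2 : ContDiffOn ℝ 2 f (Set.Icc 0 r))
    (hpos : ∀ x ∈ Set.Icc 0 r, 0 < f x)
    (hode : ∀ x ∈ Set.Ioc 0 r,
      deriv (deriv f) x / (1 + (deriv f x) ^ 2) + deriv f x / x = α / f x) :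
    (∀ x : ℝ, 0 ≤ x → x < r →
      f x < (α + 2) / α * f r - Real.sqrt (r ^ 2 + 4 * (f r) ^ 2 / α ^ 2 - x ^ 2)) ∧
    f 0 < (α + 2) / α * f r - Real.sqrt (r ^ 2 + 4 * (f r) ^ 2 / α ^ 2) := by
  have hf : IsSingularMinimalProfile α r f :=
    ⟨hf2, hpos, fun x hx => hode x (Ioo_subset_Ioc_self hx)⟩
  have hcap : ∀ x ∈ Ico 0 r,
      f x < (α + 2) / α * f r - √(r ^ 2 + 4 * f r ^ 2 / α ^ 2 - x ^ 2) := fun x =>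
    lt_sphericalCap hα hf2.continuousOn hpos (fun y hy => hf.hasDerivAt hy)
      (fun y hy => hf.mul_le_two_mul_mul_deriv hα hy)
  exact ⟨fun x hx0 hxr => hcap x ⟨hx0, hxr⟩, by simpa using hcap 0 ⟨le_rfl, hr⟩⟩

/-- Height estimate for rotational α-singular minimal profiles: if `f` solves
`f''/(1+f'^2) + f'/x = α/f` on `(0,r]` with `f(0) = z₀ > 0`, `f'(0) = 0`, and
`f(x) > sqrt(α/2) x`, then `f(x) < ((α+2)/α) f(r) - sqrt(r² + 4 f(r)²/α² - x²)`
for `0 ≤ x < r`; in particular this bounds `f(0)`. -/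
theorem stmt_6 (α r z₀ : ℝ) (hα : 0 < α) (hr : 0 < r) (hz : 0 < z₀)
    (f : ℝ → ℝ) (hf2 : ContDiffOn ℝ 2 f (Set.Icc 0 r))
    (hpos : ∀ x ∈ Set.Icc 0 r, 0 < f x)
    (hode : ∀ x ∈ Set.Ioc 0 r,
      deriv (deriv f) x / (1 + (deriv f x) ^ 2) + deriv f x / x = α / f x)
    (hf0 : f 0 = z₀) (hf'0 : deriv f 0 = 0)
    (hcone : ∀ x ∈ Set.Ioc 0 r, Real.sqrt (α / 2) * x < f x) :
    (∀ x : ℝ, 0 ≤ x → x < r →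
      f x < (α + 2) / α * f r - Real.sqrt (r ^ 2 + 4 * (f r) ^ 2 / α ^ 2 - x ^ 2)) ∧
    f 0 < (α + 2) / α * f r - Real.sqrt (r ^ 2 + 4 * (f r) ^ 2 / α ^ 2) :=
  stmt_6_general α r hα hr f hf2 hpos hode
end

section
/- Let α ∈ (0, 1]. Every maximal solution f of f''(x)/(1 + f'(x)²) = α/f(x), f(0) = z₀ > 0, f'(0) = 0, is defined on all of ℝ. -/
/-!
For `α ≤ 1` the equation has an explicit global solution. Put `β = 1/α - 1 ≥ 0` and let `S` be
the inverse of `s ↦ (z₀/α) ∫₀ˢ cosh^β`, which is onto `ℝ` because `cosh^β ≥ 1` (this is where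
`α ≤ 1` enters). Then `g = z₀ (cosh ∘ S)^(1/α)` solves the equation on all of `ℝ`, with
`g' = sinh ∘ S`. A maximal solution `f` agrees with `g` by Cauchy–Lipschitz uniqueness for the
first-order system `(f, f')' = (f', α (1 + f'²) / f)`, so its interval is already `ℝ`.

Uniqueness needs `f` to be a genuine solution, while the hypothesis, phrased with `deriv`, says
nothing at `0` (`deriv f 0 = 0` may be a junk value). Away from `0` it does: `f'' > 0` makes `f'`
strictly increasing, so `f' ≠ 0` and `f` is differentiable there. At `0`, the one-sided limit `L`
of `f` is identified by evaluating `f = α (1 + f'²) / f''` at mean-value points `ξ → 0` of `f'`,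
where `f''(ξ) → f''(0) = α / z₀`; hence `L = z₀ = f 0`.
-/

/-- `f` solves the `α`-catenary ODE `f''/(1+f'^2) = α/f` with `f` positive on
the set `s` (an interval around `0`), with initial conditions `f 0 = z₀`,
`f' 0 = 0`. -/
def CatSolOn (α z₀ : ℝ) (f : ℝ → ℝ) (s : Set ℝ) : Prop :=
  (0 : ℝ) ∈ s ∧
  (∀ x ∈ s, 0 < f x ∧ deriv (deriv f) x / (1 + (deriv f x) ^ 2) = α / f x) ∧
  f 0 = z₀ ∧ deriv f 0 = 0

open Filter Set Topology Real

theorem exists_tendsto_nhdsGT_of_hasDerivAt {f F : ℝ → ℝ} {a b : ℝ} (hab : a < b)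
    (hf : ∀ x ∈ Ioc a b, HasDerivAt f (F x) x) (hF : ContinuousOn F (Icc a b)) :
    ∃ L, Tendsto f (𝓝[>] a) (𝓝 L) := by
  have hrep : ∀ y ∈ Ioc a b, f y = f b - ∫ t in y..b, F t := by
    intro y hy
    have hsub : uIcc y b ⊆ Ioc a b := by
      rw [uIcc_of_le hy.2]; exact Icc_subset_Ioc_iff hy.2 |>.2 ⟨hy.1, le_rfl⟩
    rw [intervalIntegral.integral_eq_sub_of_hasDerivAt (fun x hx => hf x (hsub hx))
      (hF.mono (hsub.trans Ioc_subset_Icc_self)).intervalIntegrable]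
    ring
  have hcont : ContinuousOn (fun y => f b - ∫ t in y..b, F t) (Icc a b) := by
    rw [← uIcc_of_le hab.le] at hF ⊢
    exact continuousOn_const.sub (intervalIntegral.continuousOn_primitive_interval_left
      (hF.integrableOn_compact isCompact_uIcc))
  refine ⟨f b - ∫ t in a..b, F t, ?_⟩
  rw [← nhdsWithin_Ioc_eq_nhdsGT hab]
  exact ((hcont a (left_mem_Icc.2 hab.le)).mono Ioc_subset_Icc_self).tendsto.congr'
    (eventually_nhdsWithin_of_forall fun y hy => (hrep y hy).symm)

theorem exists_seq_tendsto_deriv {F F' : ℝ → ℝ} {a b : ℝ} (hab : a < b)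
    (hF : ∀ x ∈ Ico a b, HasDerivAt F (F' x) x) :
    ∃ u : ℕ → ℝ, (∀ n, u n ∈ Ioo a b) ∧ Tendsto u atTop (𝓝 a) ∧
      Tendsto (F' ∘ u) atTop (𝓝 (F' a)) := by
  obtain ⟨y, -, hy, hya⟩ := exists_seq_strictAnti_tendsto' hab
  have hmvt : ∀ n, ∃ ξ ∈ Ioo a (y n), F' ξ = slope F a (y n) := by
    intro n
    obtain ⟨ξ, hξ, h⟩ := exists_hasDerivAt_eq_slope F F' (hy n).1
      (fun x hx => (hF x ⟨hx.1, hx.2.trans_lt (hy n).2⟩).continuousAt.continuousWithinAt)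
      (fun x hx => hF x ⟨hx.1.le, hx.2.trans (hy n).2⟩)
    exact ⟨ξ, hξ, by rw [h, slope_def_field]⟩
  choose u hu hFu using hmvt
  refine ⟨u, fun n => ⟨(hu n).1, (hu n).2.trans (hy n).2⟩,
    tendsto_of_tendsto_of_tendsto_of_le_of_le tendsto_const_nhds hya
      (fun n => (hu n).1.le) (fun n => (hu n).2.le), ?_⟩
  have hy' : Tendsto y atTop (𝓝[≠] a) :=
    tendsto_nhdsWithin_iff.2 ⟨hya, Eventually.of_forall fun n => (hy n).1.ne'⟩
  simpa only [Function.comp_def, hFu] using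
    (hasDerivAt_iff_tendsto_slope.1 (hF a ⟨le_rfl, hab⟩)).comp hy'

section ODE

variable {E : Type*} [NormedAddCommGroup E] [NormedSpace ℝ E] {v : E → E} {γ₁ γ₂ : ℝ → E}

theorem ODE_solution_unique_of_eventually_of_contDiffAt {t₀ : ℝ}
    (hv : ContDiffAt ℝ 1 v (γ₁ t₀)) (h₁ : ∀ᶠ t in 𝓝 t₀, HasDerivAt γ₁ (v (γ₁ t)) t)
    (h₂ : ∀ᶠ t in 𝓝 t₀, HasDerivAt γ₂ (v (γ₂ t)) t) (heq : γ₁ t₀ = γ₂ t₀) :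
    γ₁ =ᶠ[𝓝 t₀] γ₂ := by
  obtain ⟨K, U, hU, hK⟩ := hv.exists_lipschitzOnWith
  have hU₁ : ∀ᶠ t in 𝓝 t₀, γ₁ t ∈ U := h₁.self_of_nhds.continuousAt.preimage_mem_nhds hU
  have hU₂ : ∀ᶠ t in 𝓝 t₀, γ₂ t ∈ U :=
    h₂.self_of_nhds.continuousAt.preimage_mem_nhds (heq ▸ hU)
  exact ODE_solution_unique_of_eventually (v := fun _ => v) (s := fun _ => U)
    (Eventually.of_forall fun _ => hK) (h₁.and hU₁) (h₂.and hU₂) heq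

theorem ODE_solution_unique_of_isPreconnected {s : Set ℝ} (hs : IsOpen s)
    (hs' : IsPreconnected s) (hv : ∀ t ∈ s, ContDiffAt ℝ 1 v (γ₁ t))
    (h₁ : ∀ t ∈ s, HasDerivAt γ₁ (v (γ₁ t)) t) (h₂ : ∀ t ∈ s, HasDerivAt γ₂ (v (γ₂ t)) t)
    {t₀ : ℝ} (ht₀ : t₀ ∈ s) (heq : γ₁ t₀ = γ₂ t₀) : EqOn γ₁ γ₂ s := by
  have hloc : ∀ t ∈ s, γ₁ t = γ₂ t → γ₁ =ᶠ[𝓝 t] γ₂ := fun t ht =>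
    ODE_solution_unique_of_eventually_of_contDiffAt (hv t ht)
      (eventually_of_mem (hs.mem_nhds ht) h₁) (eventually_of_mem (hs.mem_nhds ht) h₂)
  have hsub : s ⊆ {t | γ₁ =ᶠ[𝓝 t] γ₂} := by
    refine hs'.subset_of_closure_inter_subset isOpen_setOfPred_eventually_nhds
      ⟨t₀, ht₀, hloc t₀ ht₀ heq⟩ ?_
    rintro t ⟨htcl, hts⟩
    refine hloc t hts (tendsto_nhds_unique_of_frequently_eq (h₁ t hts).continuousAt
      (h₂ t hts).continuousAt ?_)
    exact (mem_closure_iff_frequently.1 htcl).mono fun _ h => h.self_of_nhds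
  exact fun t ht => (hsub ht).self_of_nhds

end ODE

theorem exists_hasDerivAt_eq_inv_comp {w : ℝ → ℝ} {ε : ℝ} (hw : Continuous w) (hε : 0 < ε)
    (hwε : ∀ x, ε ≤ w x) : ∃ S : ℝ → ℝ, S 0 = 0 ∧ ∀ x, HasDerivAt S (w (S x))⁻¹ x := by
  set X : ℝ → ℝ := fun s => ∫ t in (0 : ℝ)..s, w t
  have hX : ∀ s, HasDerivAt X (w s) s := fun s =>
    intervalIntegral.integral_hasDerivAt_right (hw.intervalIntegrable _ _)
      (hw.stronglyMeasurableAtFilter _ _) hw.continuousAt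
  have hXmono : StrictMono X := strictMono_of_hasDerivAt_pos hX fun s => hε.trans_le (hwε s)
  have hXε : Monotone fun s => X s - ε * s :=
    monotone_of_hasDerivAt_nonneg (fun s => (hX s).sub ((hasDerivAt_id s).const_mul ε))
      fun s => by simpa using hwε s
  have hX0 : X 0 = 0 := intervalIntegral.integral_same
  have hXsurj : Function.Surjective X := by
    refine (continuous_iff_continuousAt.2 fun s => (hX s).continuousAt).surjective ?_ ?_
    · refine tendsto_atTop_mono' _ ?_ (tendsto_id.const_mul_atTop hε)
      filter_upwards [eventually_ge_atTop 0] with s hs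
      simpa [hX0] using hXε hs
    · refine tendsto_atBot_mono' _ ?_ (tendsto_id.const_mul_atBot hε)
      filter_upwards [eventually_le_atBot 0] with s hs
      simpa [hX0] using hXε hs
  let e := hXmono.orderIsoOfSurjective X hXsurj
  refine ⟨e.symm, e.symm_apply_eq.2 hX0.symm, fun x => ?_⟩
  exact (hX _).of_local_left_inverse e.symm.continuous.continuousAt
    (hε.trans_le (hwε _)).ne' (Eventually.of_forall e.apply_symm_apply)

theorem exists_catSolOn_univ {α z₀ : ℝ} (hα : 0 < α) (hα1 : α ≤ 1) (hz : 0 < z₀) :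
    ∃ g, CatSolOn α z₀ g univ := by
  set β := α⁻¹ - 1
  have hβ : 0 ≤ β := sub_nonneg.2 (one_le_inv₀ hα |>.2 hα1)
  set c := z₀ / α
  have hc : 0 < c := div_pos hz hα
  have hw : ∀ t, c ≤ c * cosh t ^ β := fun t =>
    le_mul_of_one_le_right hc.le (one_le_rpow (one_le_cosh t) hβ)
  obtain ⟨S, hS0, hS⟩ := exists_hasDerivAt_eq_inv_comp (w := fun t => c * cosh t ^ β)
    (continuous_const.mul (continuous_cosh.rpow_const fun t => Or.inl (cosh_pos t).ne')) hc hw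
  have hcosh : ∀ x, 0 < cosh (S x) := fun x => cosh_pos _
  have hcoshβ : ∀ x, 0 < cosh (S x) ^ β := fun x => rpow_pos_of_pos (hcosh x) β
  set g : ℝ → ℝ := fun x => z₀ * cosh (S x) ^ (β + 1)
  have hg : ∀ x, HasDerivAt g (sinh (S x)) x := by
    intro x
    refine ((((hasDerivAt_cosh (S x)).comp x (hS x)).rpow_const
      (p := β + 1) (Or.inl (hcosh x).ne')).const_mul z₀).congr_deriv ?_
    have := hcoshβ x
    simp only [Function.comp_apply, add_sub_cancel_right, β, c]
    field_simp
    ring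
  have hg' : deriv g = fun x => sinh (S x) := funext fun x => (hg x).deriv
  refine ⟨g, mem_univ 0, fun x _ => ⟨by positivity, ?_⟩, by simp [g, hS0], by simp [hg', hS0]⟩
  have hF := (hasDerivAt_sinh (S x)).comp x (hS x)
  rw [hg']
  show deriv (sinh ∘ S) x / (1 + sinh (S x) ^ 2) = α / (z₀ * cosh (S x) ^ (β + 1))
  rw [hF.deriv, ← cosh_sq', rpow_add_one (hcosh x).ne']
  have := hcoshβ x
  have := hcosh x
  simp only [c]
  field_simp

noncomputable def catenaryField (α : ℝ) (p : ℝ × ℝ) : ℝ × ℝ :=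
  (p.2, α * (1 + p.2 ^ 2) / p.1)

namespace CatSolOn

variable {α z₀ : ℝ} {f : ℝ → ℝ} {s : Set ℝ}

theorem deriv_deriv_eq (hf : CatSolOn α z₀ f s) {x : ℝ} (hx : x ∈ s) :
    deriv (deriv f) x = α * (1 + deriv f x ^ 2) / f x := by
  have h := (hf.2.1 x hx).2
  have : 0 < f x := (hf.2.1 x hx).1
  rw [div_eq_div_iff (by positivity) this.ne'] at h
  field_simp
  linarith

theorem hasDerivAt_deriv (hα : 0 < α) (hf : CatSolOn α z₀ f s) {x : ℝ} (hx : x ∈ s) :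
    HasDerivAt (deriv f) (α * (1 + deriv f x ^ 2) / f x) x := by
  have : 0 < f x := (hf.2.1 x hx).1
  rw [← hf.deriv_deriv_eq hx]
  refine (differentiableAt_of_deriv_ne_zero ?_).hasDerivAt
  rw [hf.deriv_deriv_eq hx]
  positivity

theorem strictMonoOn_deriv (hα : 0 < α) (hs' : s.OrdConnected) (hf : CatSolOn α z₀ f s) :
    StrictMonoOn (deriv f) s := by
  refine strictMonoOn_of_hasDerivWithinAt_pos hs'.convex
    (fun x hx => (hf.hasDerivAt_deriv hα hx).continuousAt.continuousWithinAt)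
    (fun x hx => (hf.hasDerivAt_deriv hα (interior_subset hx)).hasDerivWithinAt) fun x hx => ?_
  have : 0 < f x := (hf.2.1 x (interior_subset hx)).1
  positivity

theorem hasDerivAt_of_ne_zero (hα : 0 < α) (hs' : s.OrdConnected) (hf : CatSolOn α z₀ f s)
    {x : ℝ} (hx : x ∈ s) (hx0 : x ≠ 0) : HasDerivAt f (deriv f x) x := by
  refine (differentiableAt_of_deriv_ne_zero ?_).hasDerivAt
  rw [← hf.2.2.2]
  exact (hf.strictMonoOn_deriv hα hs').injOn.ne hx hf.1 hx0

theorem comp_neg (hf : CatSolOn α z₀ f s) : CatSolOn α z₀ (fun x => f (-x)) (-s) := by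
  have h1 : deriv (fun x => f (-x)) = fun x => -deriv f (-x) := funext (deriv_comp_neg f)
  have h2 : ∀ x, deriv (deriv fun x => f (-x)) x = deriv (deriv f) (-x) := fun x => by
    rw [h1, deriv.fun_neg, deriv_comp_neg, neg_neg]
  refine ⟨by simpa using hf.1, fun x hx => ?_, by simpa using hf.2.2.1, by simp [h1, hf.2.2.2]⟩
  rw [h2, h1, neg_sq]
  exact hf.2.1 (-x) hx

theorem tendsto_nhdsGT_zero (hα : 0 < α) (hs : IsOpen s) (hs' : s.OrdConnected)
    (hf : CatSolOn α z₀ f s) : Tendsto f (𝓝[>] 0) (𝓝 z₀) := by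
  obtain ⟨δ, hδ, hδs⟩ := mem_nhdsGE_iff_exists_Icc_subset.1
    (mem_nhdsWithin_of_mem_nhds (hs.mem_nhds hf.1))
  obtain ⟨L, hL⟩ := exists_tendsto_nhdsGT_of_hasDerivAt hδ
    (fun x hx => hf.hasDerivAt_of_ne_zero hα hs' (hδs (Ioc_subset_Icc_self hx)) hx.1.ne')
    fun x hx => (hf.hasDerivAt_deriv hα (hδs hx)).continuousAt.continuousWithinAt
  obtain ⟨u, hu, hu0, hFu⟩ := exists_seq_tendsto_deriv hδ
    fun x hx => hf.hasDerivAt_deriv hα (hδs (Ico_subset_Icc_self hx))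
  have hus : ∀ n, u n ∈ s := fun n => hδs (Ioo_subset_Icc_self (hu n))
  -- along `u`, `f` is recovered from the ODE as `α (1 + f'²) / f''`, whose limit is `z₀`
  have hf0 : 0 < f 0 := (hf.2.1 0 hf.1).1
  have hfu : Tendsto (f ∘ u) atTop (𝓝 (f 0)) := by
    have hF : Tendsto (fun n => deriv f (u n)) atTop (𝓝 0) := by
      simpa [Function.comp_def, hf.2.2.2] using
        ((hf.hasDerivAt_deriv hα hf.1).continuousAt.tendsto).comp hu0
    have hlim : Tendsto (fun n => α * (1 + deriv f (u n) ^ 2) / (α * (1 + deriv f (u n) ^ 2) /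
        f (u n))) atTop (𝓝 (α * (1 + 0 ^ 2) / (α * (1 + deriv f 0 ^ 2) / f 0))) :=
      (tendsto_const_nhds.mul ((hF.pow 2).const_add 1)).div hFu
        (by rw [hf.2.2.2]; positivity)
    convert hlim using 2 with n
    · have : 0 < f (u n) := (hf.2.1 _ (hus n)).1
      rw [Function.comp_apply]
      field_simp
    · rw [hf.2.2.2]
      field_simp
  have hL' : Tendsto (f ∘ u) atTop (𝓝 L) :=
    hL.comp (tendsto_nhdsWithin_iff.2 ⟨hu0, Eventually.of_forall fun n => (hu n).1⟩)
  rwa [tendsto_nhds_unique hL' hfu, hf.2.2.1] at hL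

theorem tendsto_nhdsLT_zero (hα : 0 < α) (hs : IsOpen s) (hs' : s.OrdConnected)
    (hf : CatSolOn α z₀ f s) : Tendsto f (𝓝[<] 0) (𝓝 z₀) := by
  have hneg : Tendsto Neg.neg (𝓝[<] (0 : ℝ)) (𝓝[>] 0) := by
    simpa using tendsto_neg_nhdsLT (a := (0 : ℝ))
  simpa [Function.comp_def] using (hf.comp_neg.tendsto_nhdsGT_zero hα hs.neg
    (hs'.preimage_anti fun _ _ => neg_le_neg)).comp hneg

theorem hasDerivAt (hα : 0 < α) (hs : IsOpen s) (hs' : s.OrdConnected)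
    (hf : CatSolOn α z₀ f s) {x : ℝ} (hx : x ∈ s) : HasDerivAt f (deriv f x) x := by
  rcases ne_or_eq x 0 with hx0 | rfl
  · exact hf.hasDerivAt_of_ne_zero hα hs' hx hx0
  have hcont : ContinuousAt f 0 := by
    refine continuousAt_iff_continuous_left_right.2
      ⟨continuousWithinAt_Iio_iff_Iic.1 ?_, continuousWithinAt_Ioi_iff_Ici.1 ?_⟩ <;>
      rw [ContinuousWithinAt, hf.2.2.1]
    exacts [hf.tendsto_nhdsLT_zero hα hs hs', hf.tendsto_nhdsGT_zero hα hs hs']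
  have hdiff : DifferentiableOn ℝ f (s \ {0}) := fun y hy =>
    (hf.hasDerivAt_of_ne_zero hα hs' hy.1 hy.2).differentiableAt.differentiableWithinAt
  have hderiv : Tendsto (deriv f) (𝓝 0) (𝓝 (deriv f 0)) :=
    (hf.hasDerivAt_deriv hα hx).continuousAt
  have hleft := hasDerivWithinAt_Iic_of_tendsto_deriv hdiff hcont.continuousWithinAt
    (mem_of_superset (inter_mem_nhdsWithin _ (hs.mem_nhds hx)) fun y hy => ⟨hy.2, hy.1.ne⟩)
    (hderiv.mono_left nhdsWithin_le_nhds)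
  have hright := hasDerivWithinAt_Ici_of_tendsto_deriv hdiff hcont.continuousWithinAt
    (mem_of_superset (inter_mem_nhdsWithin _ (hs.mem_nhds hx)) fun y hy => ⟨hy.2, hy.1.ne'⟩)
    (hderiv.mono_left nhdsWithin_le_nhds)
  simpa only [Iic_union_Ici, hasDerivWithinAt_univ] using hleft.union hright

theorem eqOn (hα : 0 < α) (hs : IsOpen s) (hs' : s.OrdConnected) (hf : CatSolOn α z₀ f s)
    {g : ℝ → ℝ} (hg : CatSolOn α z₀ g s) : EqOn f g s := by
  have hγ : ∀ {h : ℝ → ℝ}, CatSolOn α z₀ h s → ∀ t ∈ s,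
      HasDerivAt (fun t => (h t, deriv h t)) (catenaryField α (h t, deriv h t)) t :=
    fun hh t ht => (hh.hasDerivAt hα hs hs' ht).prodMk (hh.hasDerivAt_deriv hα ht)
  have hv : ∀ t ∈ s, ContDiffAt ℝ 1 (catenaryField α) (f t, deriv f t) := fun t ht => by
    have : f t ≠ 0 := (hf.2.1 t ht).1.ne'
    unfold catenaryField
    fun_prop (disch := assumption)
  have := ODE_solution_unique_of_isPreconnected hs hs'.isPreconnected hv (hγ hf) (hγ hg) hf.1
    (by rw [hf.2.2.1, hf.2.2.2, hg.2.2.1, hg.2.2.2])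
  exact fun t ht => congrArg Prod.fst (this ht)

end CatSolOn

theorem stmt_18_general (α z₀ : ℝ) (hα1 : 0 < α) (hα2 : α ≤ 1) (hz : 0 < z₀)
    (a b : EReal) (f : ℝ → ℝ)
    (hsol : CatSolOn α z₀ f {x : ℝ | a < (x : EReal) ∧ (x : EReal) < b})
    (hmax : ∀ (a' b' : EReal) (g : ℝ → ℝ), a' ≤ a → b ≤ b' →
      CatSolOn α z₀ g {x : ℝ | a' < (x : EReal) ∧ (x : EReal) < b'} →
      Set.EqOn g f {x : ℝ | a < (x : EReal) ∧ (x : EReal) < b} →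
      a' = a ∧ b' = b) :
    a = ⊥ ∧ b = ⊤ := by
  have hs : IsOpen {x : ℝ | a < (x : EReal) ∧ (x : EReal) < b} :=
    isOpen_Ioo.preimage continuous_coe_real_ereal
  have hs' : Set.OrdConnected {x : ℝ | a < (x : EReal) ∧ (x : EReal) < b} :=
    ordConnected_Ioo.preimage_mono EReal.coe_strictMono.monotone
  obtain ⟨g, hg⟩ := exists_catSolOn_univ hα1 hα2 hz
  have hg_univ : CatSolOn α z₀ g {x : ℝ | (⊥ : EReal) < x ∧ (x : EReal) < ⊤} := by
    convert hg
    exact eq_univ_of_forall fun x => ⟨EReal.bot_lt_coe x, EReal.coe_lt_top x⟩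
  have hg_s : CatSolOn α z₀ g {x : ℝ | a < (x : EReal) ∧ (x : EReal) < b} :=
    ⟨hsol.1, fun x _ => hg.2.1 x trivial, hg.2.2⟩
  obtain ⟨ha, hb⟩ := hmax ⊥ ⊤ g bot_le le_top hg_univ (hg_s.eqOn hα1 hs hs' hsol)
  exact ⟨ha.symm, hb.symm⟩

/-- For `0 < α ≤ 1`, every maximal solution of the `α`-catenary ODE with
`f(0) = z₀ > 0`, `f'(0) = 0` is defined on all of `ℝ`: if `f` solves the ODE on
the interval `(a,b)` (with `a,b` extended reals, `a < 0 < b`) and is maximal —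
no solution on a larger interval agrees with it — then `a = -∞` and `b = +∞`. -/
theorem stmt_18 (α z₀ : ℝ) (hα1 : 0 < α) (hα2 : α ≤ 1) (hz : 0 < z₀)
    (a b : EReal) (ha : a < 0) (hb : 0 < b) (f : ℝ → ℝ)
    (hsol : CatSolOn α z₀ f {x : ℝ | a < (x : EReal) ∧ (x : EReal) < b})
    (hmax : ∀ (a' b' : EReal) (g : ℝ → ℝ), a' ≤ a → b ≤ b' →
      CatSolOn α z₀ g {x : ℝ | a' < (x : EReal) ∧ (x : EReal) < b'} →
      Set.EqOn g f {x : ℝ | a < (x : EReal) ∧ (x : EReal) < b} →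
      a' = a ∧ b' = b) :
    a = ⊥ ∧ b = ⊤ :=
  stmt_18_general α z₀ hα1 hα2 hz a b f hsol hmax
end

section
/- Let α > 1 and let f : (−R, R) → (0, ∞) be the maximal solution of f''(x)/(1 + f'(x)²) = α/f(x), f(0) = z₀ > 0, f'(0) = 0. Then R < ∞ and f(x) → ∞ as x → R⁻. Moreover, for λ > 0, the rescaled function f_λ(x) = λ f(x/λ) is the maximal solution with f_λ(0) = λz₀, so the maximal half-width R(z₀) satisfies R(λz₀) = λR(z₀); in particular R(z₀) → 0 as z₀ → 0 and R(z₀) → ∞ as z₀ → ∞. -/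
/-- `f` is a positive solution of the `α`-catenary ODE `f''/(1+f'^2) = α/f` on
`(-R,R)` with `f 0 = z₀` and `f' 0 = 0`. -/
def CatSol (α z₀ R : ℝ) (f : ℝ → ℝ) : Prop :=
  0 < R ∧
  (∀ x ∈ Set.Ioo (-R) R, 0 < f x ∧
    deriv (deriv f) x / (1 + (deriv f x) ^ 2) = α / f x) ∧
  f 0 = z₀ ∧ deriv f 0 = 0

/-- `f` is a maximal solution: it solves on `(-R,R)` and no solution on a
strictly larger symmetric interval extends it. -/
def MaximalCatSol (α z₀ R : ℝ) (f : ℝ → ℝ) : Prop :=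
  CatSol α z₀ R f ∧
  ∀ (R' : ℝ) (g : ℝ → ℝ), R < R' → CatSol α z₀ R' g →
    ¬ Set.EqOn g f (Set.Ioo (-R) R)

/-!
The equation is the first-order system `(f, f')' = (f', α (1 + f'²) / f)`, whose field is `C¹` on
`f > 0`. Hence solutions are unique, and a solution whose state `(f, f')` converges at `R⁻` to a
point with `f > 0` continues past `R`. Along a solution `1 + f'² = (f / z₀) ^ (2α)`, and `f`, `f'`
increase on `[0, R)`; so if `f` stayed bounded there, both limits would exist and the evenly
extended solution would contradict maximality. Uniqueness also identifies `λ f (x / λ)` as the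
maximal solution of height `λ z₀`, whence `R(λ z₀) = λ R(z₀)`.
-/

open Set Filter Topology Real

section ODE

variable {E : Type*} [NormedAddCommGroup E] [NormedSpace ℝ E] {v : E → E}

theorem ODE_solution_eventuallyEq_of_contDiffAt {γ₁ γ₂ : ℝ → E} {t₀ : ℝ}
    (hv : ContDiffAt ℝ 1 v (γ₁ t₀))
    (h₁ : ∀ᶠ t in 𝓝 t₀, HasDerivAt γ₁ (v (γ₁ t)) t)
    (h₂ : ∀ᶠ t in 𝓝 t₀, HasDerivAt γ₂ (v (γ₂ t)) t) (heq : γ₁ t₀ = γ₂ t₀) :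
    γ₁ =ᶠ[𝓝 t₀] γ₂ := by
  obtain ⟨K, N, hN, hK⟩ := hv.exists_lipschitzOnWith
  have hN₁ : ∀ᶠ t in 𝓝 t₀, γ₁ t ∈ N := h₁.self_of_nhds.continuousAt.preimage_mem_nhds hN
  have hN₂ : ∀ᶠ t in 𝓝 t₀, γ₂ t ∈ N :=
    h₂.self_of_nhds.continuousAt.preimage_mem_nhds (heq ▸ hN)
  exact ODE_solution_unique_of_eventually (v := fun _ ↦ v) (s := fun _ ↦ N)
    (Eventually.of_forall fun _ ↦ hK) (h₁.and hN₁) (h₂.and hN₂) heq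

theorem ODE_solution_eqOn_Ioo_of_contDiffAt {γ₁ γ₂ : ℝ → E} {a b t₀ : ℝ}
    (ht₀ : t₀ ∈ Ioo a b)
    (hv : ∀ t ∈ Ioo a b, ContDiffAt ℝ 1 v (γ₁ t))
    (h₁ : ∀ t ∈ Ioo a b, HasDerivAt γ₁ (v (γ₁ t)) t)
    (h₂ : ∀ t ∈ Ioo a b, HasDerivAt γ₂ (v (γ₂ t)) t) (heq : γ₁ t₀ = γ₂ t₀) :
    EqOn γ₁ γ₂ (Ioo a b) := by
  have hloc : ∀ t ∈ Ioo a b, γ₁ t = γ₂ t → γ₁ =ᶠ[𝓝 t] γ₂ := fun t ht h ↦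
    ODE_solution_eventuallyEq_of_contDiffAt (hv t ht)
      (eventually_of_mem (isOpen_Ioo.mem_nhds ht) h₁)
      (eventually_of_mem (isOpen_Ioo.mem_nhds ht) h₂) h
  suffices Ioo a b ⊆ {t | γ₁ =ᶠ[𝓝 t] γ₂} from fun t ht ↦ (this ht).self_of_nhds
  refine isPreconnected_Ioo.subset_of_closure_inter_subset (isOpen_setOfPred_eventually_nhds)
    ⟨t₀, ht₀, hloc t₀ ht₀ heq⟩ fun t ⟨htu, ht⟩ ↦ hloc t ht ?_
  exact tendsto_nhds_unique_of_frequently_eq (h₁ t ht).continuousAt (h₂ t ht).continuousAt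
    ((mem_closure_iff_frequently.1 htu).mono fun _ h ↦ h.self_of_nhds)

theorem ODE_exists_extension_of_tendsto [CompleteSpace E] {γ : ℝ → E} {a b : ℝ} {p : E}
    (hab : a < b) (hv : ContDiffAt ℝ 1 v p) (hvγ : ∀ t ∈ Ioo a b, ContDiffAt ℝ 1 v (γ t))
    (hγ : ∀ t ∈ Ioo a b, HasDerivAt γ (v (γ t)) t) (hlim : Tendsto γ (𝓝[<] b) (𝓝 p)) :
    ∃ c ∈ Ico a b, ∃ d > b, ∃ y : ℝ → E,
      (∀ t ∈ Ioo c d, HasDerivAt y (v (y t)) t) ∧ y b = p ∧ EqOn γ y (Ioo c b) := by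
  obtain ⟨r, hr, ε, hε, hsol⟩ :=
    hv.exists_forall_mem_closedBall_exists_eq_forall_mem_Ioo_hasDerivAt 0
  -- `ε` does not depend on the initial point, so a solution started near `p` at a time
  -- `t₁ > b - ε` lives past `b`.
  obtain ⟨t₁, ht₁p, ht₁⟩ : ∃ t₁, γ t₁ ∈ Metric.closedBall p r ∧ t₁ ∈ Ioo (max a (b - ε)) b :=
    ((hlim.eventually (Metric.closedBall_mem_nhds p hr)).and
      (Ioo_mem_nhdsLT (max_lt hab (sub_lt_self b hε)))).exists
  obtain ⟨y₀, hy₀t₁, hy₀⟩ := hsol _ ht₁p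
  have hab₁ : a < t₁ := (le_max_left _ _).trans_lt ht₁.1
  have hbε : b - ε < t₁ := (le_max_right _ _).trans_lt ht₁.1
  set c := max a (t₁ - ε)
  have hy : ∀ t ∈ Ioo c (t₁ + ε), HasDerivAt (fun t ↦ y₀ (t - t₁)) (v (y₀ (t - t₁))) t :=
    fun t ht ↦ (hy₀ (t - t₁) ⟨by linarith [le_max_right a (t₁ - ε), ht.1], by linarith [ht.2]⟩
      |>.comp_sub_const t t₁)
  have hc : c < t₁ := max_lt hab₁ (sub_lt_self t₁ hε)
  have hsub : Ioo c b ⊆ Ioo a b := Ioo_subset_Ioo_left (le_max_left _ _)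
  have heq : EqOn γ (fun t ↦ y₀ (t - t₁)) (Ioo c b) :=
    ODE_solution_eqOn_Ioo_of_contDiffAt ⟨hc, ht₁.2⟩ (fun t ht ↦ hvγ t (hsub ht))
      (fun t ht ↦ hγ t (hsub ht)) (fun t ht ↦ hy t ⟨ht.1, by linarith [ht.2]⟩)
      (by simp [hy₀t₁])
  have hbd : b < t₁ + ε := by linarith
  refine ⟨c, ⟨le_max_left _ _, hc.trans ht₁.2⟩, t₁ + ε, hbd, _, hy, ?_, heq⟩
  refine tendsto_nhds_unique (f := fun t ↦ y₀ (t - t₁)) (l := 𝓝[<] b)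
    ((hy b ⟨hc.trans ht₁.2, hbd⟩).continuousAt.tendsto.mono_left nhdsWithin_le_nhds) ?_
  exact hlim.congr' (eventually_of_mem (Ioo_mem_nhdsLT (hc.trans ht₁.2)) heq)

end ODE

theorem eq_of_hasDerivAt_of_tendsto_deriv_nhdsGT {v : ℝ → ℝ} {x d e : ℝ} (hv : HasDerivAt v d x)
    (hdiff : ∀ᶠ y in 𝓝[>] x, DifferentiableAt ℝ v y)
    (hlim : Tendsto (deriv v) (𝓝[>] x) (𝓝 e)) : e = d :=
  (uniqueDiffWithinAt_Ici x).eq_deriv _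
    (hasDerivWithinAt_Ici_of_tendsto_deriv (s := {y | DifferentiableAt ℝ v y})
      (fun _ hy ↦ hy.differentiableWithinAt) hv.continuousAt.continuousWithinAt hdiff hlim)
    hv.hasDerivWithinAt

theorem hasDerivAt_of_tendsto_deriv_nhdsNE {f : ℝ → ℝ} {x e : ℝ}
    (hdiff : ∀ᶠ y in 𝓝[≠] x, DifferentiableAt ℝ f y) (hf : ContinuousAt f x)
    (hlim : Tendsto (deriv f) (𝓝[≠] x) (𝓝 e)) : HasDerivAt f e x := by
  have hon : DifferentiableOn ℝ f {y | DifferentiableAt ℝ f y} :=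
    fun _ hy ↦ hy.differentiableWithinAt
  have hlt : 𝓝[<] x ≤ 𝓝[≠] x := nhdsWithin_mono _ fun _ h ↦ ne_of_lt h
  have hgt : 𝓝[>] x ≤ 𝓝[≠] x := nhdsWithin_mono _ fun _ h ↦ ne_of_gt h
  have hIic := hasDerivWithinAt_Iic_of_tendsto_deriv hon hf.continuousWithinAt (hlt hdiff)
    (hlim.mono_left hlt)
  have hIci := hasDerivWithinAt_Ici_of_tendsto_deriv hon hf.continuousWithinAt (hgt hdiff)
    (hlim.mono_left hgt)
  simpa using hIic.union hIci

theorem deriv_comp_div_const (f : ℝ → ℝ) (c x : ℝ) :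
    deriv (fun y ↦ f (y / c)) x = deriv f (x / c) / c := by
  simpa [div_eq_inv_mul, smul_eq_mul, mul_comm] using deriv_comp_mul_left c⁻¹ f x

theorem deriv_const_mul_comp_div (f : ℝ → ℝ) {c : ℝ} (hc : c ≠ 0) (x : ℝ) :
    deriv (fun y ↦ c * f (y / c)) x = deriv f (x / c) := by
  rw [deriv_const_mul_field, deriv_comp_div_const, mul_div_cancel₀ _ hc]

theorem MonotoneOn.bddAbove_image_Ioo_of_not_tendsto_atTop {α β : Type*} [LinearOrder α]
    [TopologicalSpace α] [OrderTopology α] [LinearOrder β] {f : α → β} {a b : α}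
    (hf : MonotoneOn f (Ioo a b)) (h : ¬Tendsto f (𝓝[<] b) atTop) : BddAbove (f '' Ioo a b) := by
  contrapose! h
  refine tendsto_atTop.2 fun M ↦ ?_
  obtain ⟨_, ⟨x, hx, rfl⟩, hMx⟩ := not_bddAbove_iff.1 h M
  filter_upwards [Ioo_mem_nhdsLT hx.2] with y hy
  exact hMx.le.trans (hf hx ⟨hx.1.trans hy.1, hy.2⟩ hy.1.le)

def IsCatSolAt (α : ℝ) (f : ℝ → ℝ) (x : ℝ) : Prop :=
  0 < f x ∧ deriv (deriv f) x / (1 + deriv f x ^ 2) = α / f x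

noncomputable def catField (α : ℝ) (p : ℝ × ℝ) : ℝ × ℝ :=
  (p.2, α * (1 + p.2 ^ 2) / p.1)

/-- A first integral of the catenary equation. -/
noncomputable def catEnergy (α : ℝ) (f : ℝ → ℝ) (x : ℝ) : ℝ :=
  log (1 + deriv f x ^ 2) - 2 * α * log (f x)

theorem contDiffAt_catField (α : ℝ) {p : ℝ × ℝ} (hp : p.1 ≠ 0) :
    ContDiffAt ℝ 1 (catField α) p := by
  unfold catField
  fun_prop (disch := exact hp)

namespace IsCatSolAt

variable {α x : ℝ} {f : ℝ → ℝ}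

theorem deriv_deriv_eq (h : IsCatSolAt α f x) :
    deriv (deriv f) x = α * (1 + deriv f x ^ 2) / f x := by
  have := h.2
  field_simp at this ⊢
  linarith

theorem hasDerivAt_deriv (hα : 0 < α) (h : IsCatSolAt α f x) :
    HasDerivAt (deriv f) (α * (1 + deriv f x ^ 2) / f x) x := by
  have hpos : 0 < deriv (deriv f) x := h.deriv_deriv_eq ▸ by have := h.1; positivity
  rw [← h.deriv_deriv_eq]
  exact (differentiableAt_of_deriv_ne_zero hpos.ne').hasDerivAt

theorem congr_of_eventuallyEq {g : ℝ → ℝ} (h : IsCatSolAt α f x) (hgf : g =ᶠ[𝓝 x] f) :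
    IsCatSolAt α g x := by
  rw [IsCatSolAt, hgf.eq_of_nhds, hgf.deriv_eq, hgf.deriv.deriv_eq]
  exact h

theorem comp_neg (h : IsCatSolAt α f (-x)) : IsCatSolAt α (fun y ↦ f (-y)) x := by
  have hd : deriv (fun y ↦ f (-y)) = fun y ↦ -deriv f (-y) := funext fun _ ↦ deriv_comp_neg ..
  refine ⟨h.1, ?_⟩
  rw [hd, deriv.fun_neg, deriv_comp_neg, neg_neg, neg_sq]
  exact h.2

theorem comp_div {lam : ℝ} (hlam : 0 < lam) (h : IsCatSolAt α f (x / lam)) :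
    IsCatSolAt α (fun y ↦ lam * f (y / lam)) x := by
  have hd : deriv (fun y ↦ lam * f (y / lam)) = fun y ↦ deriv f (y / lam) :=
    funext (deriv_const_mul_comp_div f hlam.ne')
  have := h.1
  refine ⟨by positivity, ?_⟩
  rw [hd, deriv_comp_div_const, h.deriv_deriv_eq]
  field_simp

end IsCatSolAt

theorem isCatSolAt_fst_of_hasDerivAt {α x : ℝ} {y : ℝ → ℝ × ℝ}
    (hy : ∀ᶠ t in 𝓝 x, HasDerivAt y (catField α (y t)) t) (hpos : 0 < (y x).1) :
    IsCatSolAt α (fun t ↦ (y t).1) x := by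
  have hfst : ∀ᶠ t in 𝓝 x, HasDerivAt (fun t ↦ (y t).1) (y t).2 t :=
    hy.mono fun t ht ↦ hasFDerivAt_fst.comp_hasDerivAt (f := y) t ht
  have hsnd : HasDerivAt (fun t ↦ (y t).2) (α * (1 + (y x).2 ^ 2) / (y x).1) x :=
    hasFDerivAt_snd.comp_hasDerivAt (f := y) x hy.self_of_nhds
  have hd : deriv (fun t ↦ (y t).1) =ᶠ[𝓝 x] fun t ↦ (y t).2 := hfst.mono fun _ ht ↦ ht.deriv
  refine ⟨hpos, ?_⟩
  rw [hd.deriv_eq, hd.self_of_nhds, hsnd.deriv]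
  field_simp

theorem IsCatSolAt.hasDerivAt_catEnergy {α x : ℝ} {f : ℝ → ℝ} (hα : 0 < α)
    (h : IsCatSolAt α f x) (hf : HasDerivAt f (deriv f x) x) :
    HasDerivAt (catEnergy α f) 0 x := by
  have hpos := h.1
  have key := (((h.hasDerivAt_deriv hα).pow 2).const_add 1).log
    (by positivity : (0:ℝ) < 1 + deriv f x ^ 2).ne' |>.sub
    ((hf.log hpos.ne').const_mul (2 * α))
  refine key.congr_deriv ?_
  simp only [Pi.pow_apply, Nat.cast_ofNat]
  field_simp
  ring

theorem catEnergy_eq_of_isPreconnected {α : ℝ} {f : ℝ → ℝ} {s : Set ℝ} (hα : 0 < α)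
    (hs : IsOpen s) (hs' : IsPreconnected s)
    (hsol : ∀ x ∈ s, IsCatSolAt α f x ∧ HasDerivAt f (deriv f x) x) {x y : ℝ}
    (hx : x ∈ s) (hy : y ∈ s) : catEnergy α f x = catEnergy α f y :=
  have hE : ∀ x ∈ s, HasDerivAt (catEnergy α f) 0 x := fun x hx ↦
    (hsol x hx).1.hasDerivAt_catEnergy hα (hsol x hx).2
  hs.is_const_of_deriv_eq_zero hs' (fun x hx ↦ (hE x hx).differentiableAt.differentiableWithinAt)
    (fun x hx ↦ (hE x hx).deriv) hx hy

namespace CatSol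

variable {α z₀ R : ℝ} {f : ℝ → ℝ}

theorem zero_mem (h : CatSol α z₀ R f) : (0 : ℝ) ∈ Ioo (-R) R := ⟨neg_lt_zero.2 h.1, h.1⟩

theorem isCatSolAt (h : CatSol α z₀ R f) {x : ℝ} (hx : x ∈ Ioo (-R) R) : IsCatSolAt α f x :=
  h.2.1 x hx

theorem pos (h : CatSol α z₀ R f) {x : ℝ} (hx : x ∈ Ioo (-R) R) : 0 < f x :=
  (h.isCatSolAt hx).1

theorem initial_pos (h : CatSol α z₀ R f) : 0 < z₀ := h.2.2.1 ▸ h.pos h.zero_mem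

theorem Ioo_zero_subset (h : CatSol α z₀ R f) : Ioo 0 R ⊆ Ioo (-R) R :=
  Ioo_subset_Ioo_left (neg_lt_zero.2 h.1).le

theorem strictMonoOn_deriv (hα : 0 < α) (h : CatSol α z₀ R f) :
    StrictMonoOn (deriv f) (Ioo (-R) R) := by
  refine strictMonoOn_of_deriv_pos (convex_Ioo _ _)
    (fun x hx ↦ ((h.isCatSolAt hx).hasDerivAt_deriv hα).continuousAt.continuousWithinAt)
    fun x hx ↦ ?_
  rw [interior_Ioo] at hx
  rw [(h.isCatSolAt hx).deriv_deriv_eq]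
  have := h.pos hx
  positivity

theorem deriv_pos (hα : 0 < α) (h : CatSol α z₀ R f) {x : ℝ} (hx : x ∈ Ioo (-R) R)
    (hx0 : 0 < x) : 0 < deriv f x :=
  h.2.2.2 ▸ h.strictMonoOn_deriv hα h.zero_mem hx hx0

theorem differentiableAt_of_ne_zero (hα : 0 < α) (h : CatSol α z₀ R f) {x : ℝ}
    (hx : x ∈ Ioo (-R) R) (hx0 : x ≠ 0) : DifferentiableAt ℝ f x := by
  refine differentiableAt_of_deriv_ne_zero ?_
  rcases hx0.lt_or_gt with hneg | hpos
  · exact (h.2.2.2 ▸ h.strictMonoOn_deriv hα hx h.zero_mem hneg).ne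
  · exact (h.deriv_pos hα hx hpos).ne'

theorem comp_neg (h : CatSol α z₀ R f) : CatSol α z₀ R (fun x ↦ f (-x)) := by
  refine ⟨h.1, fun x hx ↦ (h.isCatSolAt ?_).comp_neg, by simpa using h.2.2.1, ?_⟩
  · exact ⟨neg_lt_neg hx.2, neg_lt.1 hx.1⟩
  · rw [deriv_comp_neg, neg_zero, h.2.2.2, neg_zero]

theorem exists_tendsto_nhdsGT_zero (hα : 0 < α) (h : CatSol α z₀ R f) :
    ∃ a > 0, Tendsto f (𝓝[>] 0) (𝓝 a) := by
  have hR := h.1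
  have hsub := h.Ioo_zero_subset
  set C := catEnergy α f (R / 2)
  have hE : ∀ x ∈ Ioo 0 R, catEnergy α f x = C := fun x hx ↦
    catEnergy_eq_of_isPreconnected hα isOpen_Ioo isPreconnected_Ioo
      (fun y hy ↦ ⟨h.isCatSolAt (hsub hy),
        (h.differentiableAt_of_ne_zero hα (hsub hy) hy.1.ne').hasDerivAt⟩)
      hx ⟨half_pos hR, half_lt_self hR⟩
  have hf_eq : ∀ x ∈ Ioo 0 R, f x = exp ((log (1 + deriv f x ^ 2) - C) / (2 * α)) := by
    intro x hx
    rw [← hE x hx, catEnergy, sub_sub_cancel, mul_div_cancel_left₀ _ (by positivity),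
      exp_log (h.pos (hsub hx))]
  have hcont : ContinuousAt (fun x ↦ exp ((log (1 + deriv f x ^ 2) - C) / (2 * α))) 0 := by
    have := ((h.isCatSolAt h.zero_mem).hasDerivAt_deriv hα).continuousAt
    fun_prop (disch := positivity)
  exact ⟨_, exp_pos _, (hcont.tendsto.mono_left nhdsWithin_le_nhds).congr'
    (eventually_of_mem (Ioo_mem_nhdsGT hR) fun x hx ↦ (hf_eq x hx).symm)⟩

/-- Since `deriv` does not assert differentiability, `f` might a priori jump at `0`: its value
there is pinned only through `f''(0) = α / f 0`, and `f'' → α / a` forces `a = f 0`. -/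
theorem tendsto_nhdsGT_zero (hα : 0 < α) (h : CatSol α z₀ R f) :
    Tendsto f (𝓝[>] 0) (𝓝 z₀) := by
  obtain ⟨a, ha, hlim⟩ := h.exists_tendsto_nhdsGT_zero hα
  have hsub := h.Ioo_zero_subset
  have hIoo : Ioo 0 R ∈ 𝓝[>] (0 : ℝ) := Ioo_mem_nhdsGT h.1
  have hv : HasDerivAt (deriv f) (α * (1 + deriv f 0 ^ 2) / f 0) 0 :=
    (h.isCatSolAt h.zero_mem).hasDerivAt_deriv hα
  have hlim₂ : Tendsto (deriv (deriv f)) (𝓝[>] 0) (𝓝 (α * (1 + deriv f 0 ^ 2) / a)) :=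
    ((((hv.continuousAt.tendsto.mono_left nhdsWithin_le_nhds).pow 2).const_add 1).const_mul α
      |>.div hlim ha.ne').congr'
      (eventually_of_mem hIoo fun x hx ↦ (h.isCatSolAt (hsub hx)).deriv_deriv_eq.symm)
  have hdiff : ∀ᶠ x in 𝓝[>] 0, DifferentiableAt ℝ (deriv f) x := eventually_of_mem hIoo
    fun x hx ↦ ((h.isCatSolAt (hsub hx)).hasDerivAt_deriv hα).differentiableAt
  have heq := eq_of_hasDerivAt_of_tendsto_deriv_nhdsGT hv hdiff hlim₂
  rw [h.2.2.1, div_eq_div_iff ha.ne' h.initial_pos.ne'] at heq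
  have hne : α * (1 + deriv f 0 ^ 2) ≠ 0 := by positivity
  exact mul_left_cancel₀ hne heq ▸ hlim

theorem continuousAt_zero (hα : 0 < α) (h : CatSol α z₀ R f) : ContinuousAt f 0 := by
  have hneg : Tendsto (fun x : ℝ ↦ -x) (𝓝[<] 0) (𝓝[>] 0) :=
    tendsto_nhdsWithin_of_tendsto_nhds_of_eventually_within _
      ((continuous_neg.tendsto' 0 0 neg_zero).mono_left nhdsWithin_le_nhds)
      (eventually_mem_nhdsWithin.mono fun _ hx ↦ mem_Ioi.2 (neg_pos.2 hx))
  rw [continuousAt_iff_continuous_left'_right', ContinuousWithinAt, ContinuousWithinAt, h.2.2.1]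
  exact ⟨by simpa [Function.comp_def] using (h.comp_neg.tendsto_nhdsGT_zero hα).comp hneg,
    h.tendsto_nhdsGT_zero hα⟩

theorem hasDerivAt (hα : 0 < α) (h : CatSol α z₀ R f) {x : ℝ} (hx : x ∈ Ioo (-R) R) :
    HasDerivAt f (deriv f x) x := by
  rcases eq_or_ne x 0 with rfl | hx0
  · refine hasDerivAt_of_tendsto_deriv_nhdsNE ?_ (h.continuousAt_zero hα)
      (((h.isCatSolAt hx).hasDerivAt_deriv hα).continuousAt.tendsto.mono_left nhdsWithin_le_nhds)
    filter_upwards [nhdsWithin_le_nhds (isOpen_Ioo.mem_nhds hx), self_mem_nhdsWithin]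
      with y hy hy0 using h.differentiableAt_of_ne_zero hα hy hy0
  · exact (h.differentiableAt_of_ne_zero hα hx hx0).hasDerivAt

theorem one_add_sq_deriv (hα : 0 < α) (h : CatSol α z₀ R f) {x : ℝ} (hx : x ∈ Ioo (-R) R) :
    1 + deriv f x ^ 2 = (f x / z₀) ^ (2 * α) := by
  have hE := catEnergy_eq_of_isPreconnected hα isOpen_Ioo isPreconnected_Ioo
    (fun y hy ↦ ⟨h.isCatSolAt hy, h.hasDerivAt hα hy⟩) hx h.zero_mem
  simp only [catEnergy, h.2.2.2, h.2.2.1, ne_eq, OfNat.ofNat_ne_zero, not_false_eq_true,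
    zero_pow, add_zero, log_one, zero_sub] at hE
  rw [rpow_def_of_pos (div_pos (h.pos hx) h.initial_pos),
    log_div (h.pos hx).ne' h.initial_pos.ne', ← exp_log (by positivity : 0 < 1 + deriv f x ^ 2)]
  congr 1
  linarith

theorem hasDerivAt_state (hα : 0 < α) (h : CatSol α z₀ R f) {x : ℝ} (hx : x ∈ Ioo (-R) R) :
    HasDerivAt (fun t ↦ (f t, deriv f t)) (catField α (f x, deriv f x)) x :=
  (h.hasDerivAt hα hx).prodMk ((h.isCatSolAt hx).hasDerivAt_deriv hα)

theorem eqOn_of_le (hα : 0 < α) {R' : ℝ} {g : ℝ → ℝ} (h : CatSol α z₀ R f)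
    (hg : CatSol α z₀ R' g) (hR : R ≤ R') : EqOn g f (Ioo (-R) R) := by
  have hsub : Ioo (-R) R ⊆ Ioo (-R') R' := Ioo_subset_Ioo (neg_le_neg hR) hR
  have := ODE_solution_eqOn_Ioo_of_contDiffAt h.zero_mem
    (fun x hx ↦ contDiffAt_catField α (h.pos hx).ne') (fun x hx ↦ h.hasDerivAt_state hα hx)
    (fun x hx ↦ hg.hasDerivAt_state hα (hsub hx)) (by rw [h.2.2.1, h.2.2.2, hg.2.2.1, hg.2.2.2])
  exact fun x hx ↦ (congrArg Prod.fst (this hx)).symm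

theorem even (hα : 0 < α) (h : CatSol α z₀ R f) {x : ℝ} (hx : x ∈ Ioo (-R) R) :
    f (-x) = f x :=
  h.eqOn_of_le hα h.comp_neg le_rfl hx

theorem comp_div (h : CatSol α z₀ R f) {lam : ℝ} (hlam : 0 < lam) :
    CatSol α (lam * z₀) (lam * R) (fun x ↦ lam * f (x / lam)) := by
  refine ⟨mul_pos hlam h.1, fun x hx ↦ (h.isCatSolAt ?_).comp_div hlam, by simp [h.2.2.1], ?_⟩
  · rw [mem_Ioo, lt_div_iff₀ hlam, div_lt_iff₀ hlam]
    constructor <;> linarith [hx.1, hx.2]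
  · rw [deriv_const_mul_comp_div f hlam.ne', zero_div, h.2.2.2]

/-- Maximality concerns symmetric intervals, so the continuation `y` past `R` is mirrored to `-R`,
which is consistent because `f` is even. -/
theorem exists_extension_of_trajectory (hα : 0 < α) (h : CatSol α z₀ R f) {ρ : ℝ}
    (hρ : 0 < ρ) (hρR : ρ ≤ R) {y : ℝ → ℝ × ℝ}
    (hy : ∀ t ∈ Ioo (R - ρ) (R + ρ), HasDerivAt y (catField α (y t)) t ∧ 0 < (y t).1)
    (hyf : ∀ t ∈ Ioo (R - ρ) R, (y t).1 = f t) :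
    ∃ g, CatSol α z₀ (R + ρ) g ∧ EqOn g f (Ioo (-R) R) := by
  set g : ℝ → ℝ := fun t ↦ if |t| < R then f t else (y |t|).1
  have hgf : EqOn g f (Ioo (-R) R) := fun t ht ↦ if_pos (abs_lt.2 ht)
  have hgf_nhds : ∀ t ∈ Ioo (-R) R, g =ᶠ[𝓝 t] f := fun t ht ↦
    eventually_of_mem (isOpen_Ioo.mem_nhds ht) hgf
  have hg_even : (fun t ↦ g (-t)) = g := by
    funext t
    simp only [g, abs_neg]
    split_ifs with ht
    exacts [h.even hα (abs_lt.1 ht), rfl]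
  have hright : ∀ t ∈ Ico R (R + ρ), IsCatSolAt α g t := by
    intro t ht
    have hmem : Ioo (R - ρ) (R + ρ) ∈ 𝓝 t := Ioo_mem_nhds (by linarith [ht.1]) ht.2
    have hgy : g =ᶠ[𝓝 t] fun s ↦ (y s).1 := eventually_of_mem hmem fun s hs ↦ by
      simp only [g, abs_of_nonneg (by linarith [hs.1] : 0 ≤ s)]
      split_ifs with hsR
      exacts [(hyf s ⟨hs.1, hsR⟩).symm, rfl]
    exact (isCatSolAt_fst_of_hasDerivAt (eventually_of_mem hmem fun s hs ↦ (hy s hs).1)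
      (hy t (mem_of_mem_nhds hmem)).2).congr_of_eventuallyEq hgy
  refine ⟨g, ⟨by linarith [h.1], fun t ht ↦ ?_, ?_, ?_⟩, hgf⟩
  · rcases lt_or_ge |t| R with htR | htR
    · exact (h.isCatSolAt (abs_lt.1 htR)).congr_of_eventuallyEq (hgf_nhds t (abs_lt.1 htR))
    rcases le_or_gt 0 t with ht0 | ht0
    · exact hright t ⟨abs_of_nonneg ht0 ▸ htR, ht.2⟩
    · rw [← hg_even]
      exact IsCatSolAt.comp_neg (hright (-t) ⟨abs_of_neg ht0 ▸ htR, by linarith [ht.1]⟩)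
  · rw [hgf h.zero_mem, h.2.2.1]
  · rw [(hgf_nhds 0 h.zero_mem).deriv_eq, h.2.2.2]

theorem exists_extension_of_tendsto (hα : 0 < α) (h : CatSol α z₀ R f) {L V : ℝ}
    (hL : Tendsto f (𝓝[<] R) (𝓝 L)) (hL0 : 0 < L) (hV : Tendsto (deriv f) (𝓝[<] R) (𝓝 V)) :
    ∃ R' > R, ∃ g, CatSol α z₀ R' g ∧ EqOn g f (Ioo (-R) R) := by
  have hsub := h.Ioo_zero_subset
  obtain ⟨c, hc, d, hd, y, hy, hyR, hγy⟩ := ODE_exists_extension_of_tendsto h.1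
    (contDiffAt_catField α (p := (L, V)) hL0.ne')
    (fun t ht ↦ contDiffAt_catField α (h.pos (hsub ht)).ne')
    (fun t ht ↦ h.hasDerivAt_state hα (hsub ht)) (hL.prodMk_nhds hV)
  have hyc : ContinuousAt (fun t ↦ (y t).1) R :=
    continuousAt_fst.comp (hy R ⟨hc.2, hd⟩).continuousAt
  obtain ⟨δ, hδ, hpos⟩ := Metric.eventually_nhds_iff_ball.1
    (hyc.eventually (eventually_gt_nhds (by simpa [hyR] using hL0)))
  set ρ := min (min (R - c) (d - R)) δ
  have hρ : 0 < ρ := lt_min (lt_min (by linarith [hc.2]) (by linarith)) hδ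
  have hρc : ρ ≤ R - c := (min_le_left _ _).trans (min_le_left _ _)
  have hρd : ρ ≤ d - R := (min_le_left _ _).trans (min_le_right _ _)
  have hρδ : ρ ≤ δ := min_le_right _ _
  refine ⟨R + ρ, by linarith, h.exists_extension_of_trajectory hα hρ (by linarith [hc.1])
    (fun t ht ↦ ⟨hy t ⟨by linarith [ht.1], by linarith [ht.2]⟩, hpos t ?_⟩)
    (fun t ht ↦ (congrArg Prod.fst (hγy ⟨by linarith [ht.1], ht.2⟩)).symm)⟩
  rw [Real.ball_eq_Ioo]
  exact ⟨by linarith [ht.1], by linarith [ht.2]⟩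

end CatSol

namespace MaximalCatSol

variable {α z₀ R : ℝ} {f : ℝ → ℝ}

theorem le_of_catSol (hα : 0 < α) (hf : MaximalCatSol α z₀ R f) {R' : ℝ} {g : ℝ → ℝ}
    (hg : CatSol α z₀ R' g) : R' ≤ R := by
  by_contra! hlt
  exact hf.2 R' g hlt hg (hf.1.eqOn_of_le hα hg hlt.le)

theorem radius_eq (hα : 0 < α) (hf : MaximalCatSol α z₀ R f) {R' : ℝ} {g : ℝ → ℝ}
    (hg : MaximalCatSol α z₀ R' g) : R' = R :=
  le_antisymm (hf.le_of_catSol hα hg.1) (hg.le_of_catSol hα hf.1)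

theorem comp_div (hf : MaximalCatSol α z₀ R f) {lam : ℝ} (hlam : 0 < lam) :
    MaximalCatSol α (lam * z₀) (lam * R) (fun x ↦ lam * f (x / lam)) := by
  refine ⟨hf.1.comp_div hlam, fun R' g hR' hg hgf ↦ ?_⟩
  have hg' := hg.comp_div (inv_pos.2 hlam)
  rw [inv_mul_cancel_left₀ hlam.ne'] at hg'
  refine hf.2 _ _ ((lt_inv_mul_iff₀ hlam).2 hR') hg' fun x hx ↦ ?_
  have hlx : lam * x ∈ Ioo (-(lam * R)) (lam * R) := by
    rw [← mul_neg]
    exact ⟨mul_lt_mul_of_pos_left hx.1 hlam, mul_lt_mul_of_pos_left hx.2 hlam⟩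
  have := hgf hlx
  simp only [mul_div_cancel_left₀ _ hlam.ne'] at this
  simp only [div_inv_eq_mul, mul_comm x, this, inv_mul_cancel_left₀ hlam.ne']

theorem tendsto_atTop (hα : 0 < α) (hf : MaximalCatSol α z₀ R f) :
    Tendsto f (𝓝[<] R) atTop := by
  by_contra hnot
  have h := hf.1
  have hsub := h.Ioo_zero_subset
  have hne : (Ioo 0 R).Nonempty := nonempty_Ioo.2 h.1
  have hmono : MonotoneOn f (Ioo 0 R) :=
    (strictMonoOn_of_deriv_pos (convex_Ioo 0 R)
      (fun x hx ↦ (h.hasDerivAt hα (hsub hx)).continuousAt.continuousWithinAt)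
      fun x hx ↦ by
        rw [interior_Ioo] at hx
        exact h.deriv_pos hα (hsub hx) hx.1).monotoneOn
  obtain ⟨M, hM⟩ := hmono.bddAbove_image_Ioo_of_not_tendsto_atTop hnot
  have hbdd' : BddAbove (deriv f '' Ioo 0 R) := by
    refine ⟨(M / z₀) ^ (2 * α), ?_⟩
    rintro _ ⟨x, hx, rfl⟩
    have hfx := h.pos (hsub hx)
    calc deriv f x ≤ 1 + deriv f x ^ 2 := by nlinarith [sq_nonneg (deriv f x - 1)]
      _ = (f x / z₀) ^ (2 * α) := h.one_add_sq_deriv hα (hsub hx)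
      _ ≤ (M / z₀) ^ (2 * α) := by
        have := h.initial_pos
        gcongr
        exact hM ⟨x, hx, rfl⟩
  have hL := hmono.tendsto_nhdsWithin_Ioo_left hne ⟨M, hM⟩
  have hV := ((h.strictMonoOn_deriv hα).mono hsub).monotoneOn.tendsto_nhdsWithin_Ioo_left
    hne hbdd'
  have hL0 : 0 < sSup (f '' Ioo 0 R) :=
    (h.pos (hsub hne.some_mem)).trans_le (le_csSup ⟨M, hM⟩ ⟨_, hne.some_mem, rfl⟩)
  obtain ⟨R', hR', g, hg, hgf⟩ := h.exists_extension_of_tendsto hα hL hL0 hV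
  exact hf.2 R' g hR' hg hgf

end MaximalCatSol

theorem stmt_19_general (α z₀ R : ℝ) (hα : 1 < α)
    (f : ℝ → ℝ) (hf : MaximalCatSol α z₀ R f) :
    (∀ g : ℝ → ℝ, ¬ ((∀ x : ℝ, 0 < g x ∧
        deriv (deriv g) x / (1 + (deriv g x) ^ 2) = α / g x) ∧
        g 0 = z₀ ∧ deriv g 0 = 0)) ∧
    Filter.Tendsto f (nhdsWithin R (Set.Iio R)) Filter.atTop ∧
    (∀ lam : ℝ, 0 < lam →
      MaximalCatSol α (lam * z₀) (lam * R) (fun x => lam * f (x / lam))) ∧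
    (∀ (z₀' R' : ℝ) (f' : ℝ → ℝ), 0 < z₀' → MaximalCatSol α z₀' R' f' →
      R' = (z₀' / z₀) * R) ∧
    Filter.Tendsto (fun z₀' : ℝ => (z₀' / z₀) * R)
      (nhdsWithin 0 (Set.Ioi 0)) (nhds 0) ∧
    Filter.Tendsto (fun z₀' : ℝ => (z₀' / z₀) * R) Filter.atTop Filter.atTop := by
  have hα0 : 0 < α := one_pos.trans hα
  have hz : 0 < z₀ := hf.1.initial_pos
  refine ⟨fun g ⟨hg, hg0, hg0'⟩ ↦ ?_, hf.tendsto_atTop hα0, fun lam hlam ↦ hf.comp_div hlam,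
    fun z₀' R' f' hz' hf' ↦ ?_, ?_, (tendsto_id.atTop_div_const hz).atTop_mul_const hf.1.1⟩
  · have := hf.le_of_catSol hα0 (R' := R + 1) ⟨by linarith [hf.1.1], fun x _ ↦ hg x, hg0, hg0'⟩
    linarith
  · have hF := hf'.comp_div (div_pos hz hz')
    rw [div_mul_cancel₀ _ hz'.ne'] at hF
    have := hf.radius_eq hα0 hF
    field_simp at this ⊢
    linarith
  · have : Continuous fun z₀' : ℝ ↦ z₀' / z₀ * R := by fun_prop
    simpa using (this.tendsto 0).mono_left nhdsWithin_le_nhds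

/-- For `α > 1`, the maximal solution of the `α`-catenary ODE with
`f(0) = z₀ > 0`, `f'(0) = 0` blows up at a finite half-width `R`: there is no
global solution on all of `ℝ` (so `R < ∞`), `f(x) → ∞` as `x → R⁻`, the
rescaling `x ↦ λ f(x/λ)` is the maximal solution with initial height `λz₀` and
half-width `λR` (the scaling law `R(λz₀) = λR(z₀)`), so every maximal solution
with initial height `z₀'` has half-width `(z₀'/z₀)R`; in particular the
half-width tends to `0` as `z₀' → 0⁺` and to `∞` as `z₀' → ∞`. -/
theorem stmt_19 (α z₀ R : ℝ) (hα : 1 < α) (hz : 0 < z₀)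
    (f : ℝ → ℝ) (hf : MaximalCatSol α z₀ R f) :
    (∀ g : ℝ → ℝ, ¬ ((∀ x : ℝ, 0 < g x ∧
        deriv (deriv g) x / (1 + (deriv g x) ^ 2) = α / g x) ∧
        g 0 = z₀ ∧ deriv g 0 = 0)) ∧
    Filter.Tendsto f (nhdsWithin R (Set.Iio R)) Filter.atTop ∧
    (∀ lam : ℝ, 0 < lam →
      MaximalCatSol α (lam * z₀) (lam * R) (fun x => lam * f (x / lam))) ∧
    (∀ (z₀' R' : ℝ) (f' : ℝ → ℝ), 0 < z₀' → MaximalCatSol α z₀' R' f' →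
      R' = (z₀' / z₀) * R) ∧
    Filter.Tendsto (fun z₀' : ℝ => (z₀' / z₀) * R)
      (nhdsWithin 0 (Set.Ioi 0)) (nhds 0) ∧
    Filter.Tendsto (fun z₀' : ℝ => (z₀' / z₀) * R) Filter.atTop Filter.atTop :=
  stmt_19_general α z₀ R hα f hf
end
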